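/- Let x₁ = g_{(0,1/6)}(√−5)^{−12}, x₂ = g_{(1/6,0)}(√−5)^{−12}, x₃ = g_{(3/6,2/6)}(√−5)^{−12}, x₄ = g_{(2/6,3/6)}(√−5)^{−12}, x₅ = g_{(3/6,2/6)}((−1+√−5)/2)^{−12}, x₆ = g_{(1/6,5/6)}((−1+√−5)/2)^{−12}, x₇ = g_{(3/6,1/6)}((−1+√−5)/2)^{−12}, x₈ = g_{(5/6,4/6)}((−1+√−5)/2)^{−12}. Then |x_i / x₁| < 10⁻⁴ for every i = 2, …, 8; in particular |x_i/x₁| < 1/8 for i = 2, …, 8. -/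

import Mathlib

/-!
Write `q = e^{2πiτ}` and `q_z = e^{2πiz}`. The `n`-th factor of the product in `g_{(r₁,r₂)}(τ)`
differs from `1` by at most `|q|ⁿ (|q q_z| + |q / q_z|)`, a geometric majorant, so for
`0 ≤ r₁ ≤ 1` the product has modulus between `1 - 3|q|^{1-r₁}` and `exp (3|q|^{1-r₁})`, and
`|g_{(r₁,r₂)}(τ)|` is essentially `e^{-π B₂(r₁) Im τ} |1 - q_z|`. Since `π√5 ≈ 7.02`, this gives
`|g_{(0,1/6)}(√−5)|¹² ≤ 10⁻⁶`, while the other seven Siegel values have modulus at least `7/10`,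
and `10⁻⁶ / (7/10)¹² < 10⁻⁴`. For `g_{(1/6,5/6)}` and `g_{(5/6,4/6)}` at `(−1+√−5)/2` the bound
`|1 - w| ≥ 1 - |w|` is too weak for one factor, with `|w| = e^{-π√5/6}`; but there `w` is purely
imaginary, so `|1 - w| ≥ 1`.
-/

/-- The `n`-th factor (for `n = 1, 2, …`, indexed here by `ℕ` via `n ↦ n + 1`) of the
infinite product defining the Siegel function:
`(1 − q_τ^{n+1} q_z)(1 − q_τ^{n+1} q_z⁻¹)` with `q_τ = e^{2πiτ}`, `q_z = e^{2πiz}`,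
`z = r₁ τ + r₂`. -/
noncomputable def siegelTerm (r₁ r₂ : ℚ) (τ : ℂ) (n : ℕ) : ℂ :=
  (1 - Complex.exp (2 * Real.pi * Complex.I * τ) ^ (n + 1) *
      Complex.exp (2 * Real.pi * Complex.I * ((r₁ : ℂ) * τ + (r₂ : ℂ)))) *
  (1 - Complex.exp (2 * Real.pi * Complex.I * τ) ^ (n + 1) *
      (Complex.exp (2 * Real.pi * Complex.I * ((r₁ : ℂ) * τ + (r₂ : ℂ))))⁻¹)

/-- The Siegel function
`g_{(r₁,r₂)}(τ) = −q_τ^{(1/2)B₂(r₁)} e^{πi r₂(r₁−1)} (1−q_z) ∏_{n≥1} (1−q_τⁿq_z)(1−q_τⁿq_z⁻¹)`,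
where `B₂(X) = X² − X + 1/6`, `q_τ^{(1/2)B₂(r₁)} = e^{πi B₂(r₁) τ}`, and `z = r₁τ + r₂`. -/
noncomputable def siegel (r₁ r₂ : ℚ) (τ : ℂ) : ℂ :=
  -Complex.exp (Real.pi * Complex.I * ((r₁ : ℂ) ^ 2 - (r₁ : ℂ) + 1 / 6) * τ) *
    Complex.exp (Real.pi * Complex.I * (r₂ : ℂ) * ((r₁ : ℂ) - 1)) *
    (1 - Complex.exp (2 * Real.pi * Complex.I * ((r₁ : ℂ) * τ + (r₂ : ℂ)))) *
    ∏' n : ℕ, siegelTerm r₁ r₂ τ n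

/-- The eight conjugates `x₁, …, x₈` of `x = g_{(0,1/6)}(√−5)^{−12}` over
`K = ℚ(√−5)`, given by singular values of Siegel functions at `√−5 = i√5` and
`(−1+√−5)/2`. -/
noncomputable def exampleConjugates : Fin 8 → ℂ :=
  ![siegel 0 (1/6) (Complex.I * Real.sqrt 5) ^ (-12 : ℤ),
    siegel (1/6) 0 (Complex.I * Real.sqrt 5) ^ (-12 : ℤ),
    siegel (3/6) (2/6) (Complex.I * Real.sqrt 5) ^ (-12 : ℤ),
    siegel (2/6) (3/6) (Complex.I * Real.sqrt 5) ^ (-12 : ℤ),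
    siegel (3/6) (2/6) ((-1 + Complex.I * Real.sqrt 5) / 2) ^ (-12 : ℤ),
    siegel (1/6) (5/6) ((-1 + Complex.I * Real.sqrt 5) / 2) ^ (-12 : ℤ),
    siegel (3/6) (1/6) ((-1 + Complex.I * Real.sqrt 5) / 2) ^ (-12 : ℤ),
    siegel (5/6) (4/6) ((-1 + Complex.I * Real.sqrt 5) / 2) ^ (-12 : ℤ)]

open Real
open Complex (I)

section NormTprod

variable {ι R : Type*} [NormedCommRing R] [NormMulClass R] [NormOneClass R]
  {f : ι → R} {u : ι → ℝ} {S : ℝ}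

theorem Finset.one_sub_sum_le_prod_one_sub (s : Finset ι) (hu0 : ∀ i ∈ s, 0 ≤ u i)
    (hu1 : ∀ i ∈ s, u i ≤ 1) : 1 - ∑ i ∈ s, u i ≤ ∏ i ∈ s, (1 - u i) := by
  classical
  induction s using Finset.induction_on with
  | empty => simp
  | insert a s ha ih =>
    rw [Finset.prod_insert ha, Finset.sum_insert ha]
    have ih := ih (fun i hi => hu0 i (by simp [hi])) (fun i hi => hu1 i (by simp [hi]))
    have hs : 0 ≤ ∑ i ∈ s, u i := Finset.sum_nonneg fun i hi => hu0 i (by simp [hi])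
    nlinarith [hu0 a (by simp), hu1 a (by simp)]

theorem one_sub_le_norm_tprod (hu : HasSum u S) (hu0 : ∀ i, 0 ≤ u i)
    (hf : ∀ i, 1 - u i ≤ ‖f i‖) : 1 - S ≤ ‖∏' i, f i‖ := by
  by_cases hS : 1 < S
  · exact (sub_neg.2 hS).le.trans (norm_nonneg _)
  by_cases hmul : Multipliable f
  · refine ge_of_tendsto' ((continuous_norm.tendsto _).comp hmul.hasProd) fun s => ?_
    have hu1 : ∀ i, u i ≤ 1 := fun i => (le_hasSum hu i fun j _ => hu0 j).trans (not_lt.1 hS)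
    calc 1 - S ≤ 1 - ∑ i ∈ s, u i := by linarith [sum_le_hasSum s (fun i _ => hu0 i) hu]
      _ ≤ ∏ i ∈ s, (1 - u i) :=
        s.one_sub_sum_le_prod_one_sub (fun i _ => hu0 i) fun i _ => hu1 i
      _ ≤ ‖∏ i ∈ s, f i‖ := by
        rw [norm_prod]
        exact Finset.prod_le_prod (fun i _ => sub_nonneg.2 (hu1 i)) fun i _ => hf i
  · rw [tprod_eq_one_of_not_multipliable hmul, norm_one]
    linarith [hu.nonneg hu0]

theorem norm_tprod_le_exp (hu : HasSum u S) (hu0 : ∀ i, 0 ≤ u i)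
    (hf : ∀ i, ‖f i‖ ≤ exp (u i)) : ‖∏' i, f i‖ ≤ exp S := by
  by_cases hmul : Multipliable f
  · refine le_of_tendsto' ((continuous_norm.tendsto _).comp hmul.hasProd) fun s => ?_
    calc ‖∏ i ∈ s, f i‖ ≤ ∏ i ∈ s, exp (u i) := by
          rw [norm_prod]
          exact Finset.prod_le_prod (fun i _ => norm_nonneg _) fun i _ => hf i
      _ = exp (∑ i ∈ s, u i) := (exp_sum s u).symm
      _ ≤ exp S := exp_le_exp.2 (sum_le_hasSum s (fun i _ => hu0 i) hu)
  · rw [tprod_eq_one_of_not_multipliable hmul, norm_one]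
    exact one_le_exp (hu.nonneg hu0)

end NormTprod

section Elementary

variable {R : Type*} [NormedRing R] [NormMulClass R] [NormOneClass R]

theorem one_sub_norm_sub_norm_le_norm_one_sub_mul_one_sub (a b : R) :
    1 - ‖a‖ - ‖b‖ ≤ ‖(1 - a) * (1 - b)‖ := by
  have ha := norm_sub_norm_le (1 : R) a
  have hb := norm_sub_norm_le (1 : R) b
  rw [norm_one] at ha hb
  rw [norm_mul]
  by_cases h : ‖a‖ ≤ 1
  · nlinarith [norm_nonneg a, norm_nonneg b, norm_nonneg (1 - b)]
  · nlinarith [norm_nonneg (1 - a), norm_nonneg (1 - b), norm_nonneg b]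

theorem one_sub_norm_le_norm_one_sub_mul_one_sub {b : R} (hb : 1 ≤ ‖1 - b‖) (a : R) :
    1 - ‖a‖ ≤ ‖(1 - a) * (1 - b)‖ := by
  have ha := norm_sub_norm_le (1 : R) a
  rw [norm_one] at ha
  rw [norm_mul]
  nlinarith [norm_nonneg (1 - a)]

theorem norm_one_sub_mul_one_sub_le_exp (a b : R) :
    ‖(1 - a) * (1 - b)‖ ≤ exp (‖a‖ + ‖b‖) := by
  rw [norm_mul, exp_add]
  have ha : ‖1 - a‖ ≤ exp ‖a‖ := (norm_sub_le _ _).trans <| by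
    rw [norm_one, add_comm]; exact add_one_le_exp _
  have hb : ‖1 - b‖ ≤ exp ‖b‖ := (norm_sub_le _ _).trans <| by
    rw [norm_one, add_comm]; exact add_one_le_exp _
  exact mul_le_mul ha hb (norm_nonneg _) (exp_pos _).le

end Elementary

theorem Complex.one_le_norm_one_sub_of_re_nonpos {w : ℂ} (hw : w.re ≤ 0) : 1 ≤ ‖1 - w‖ := by
  calc (1 : ℝ) ≤ (1 - w).re := by rw [Complex.sub_re, Complex.one_re]; linarith
    _ ≤ ‖1 - w‖ := Complex.re_le_norm _

theorem norm_exp_two_pi_I_mul (w : ℂ) :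
    ‖Complex.exp (2 * π * I * w)‖ = exp (-2 * π * w.im) := by
  rw [Complex.norm_exp]; congr 1; simp

theorem re_exp_two_pi_I_mul (w : ℂ) :
    (Complex.exp (2 * π * I * w)).re = exp (-2 * π * w.im) * cos (2 * π * w.re) := by
  rw [Complex.exp_re]; congr 2 <;> simp

theorem norm_siegel (r₁ r₂ : ℚ) (τ : ℂ) :
    ‖siegel r₁ r₂ τ‖ = exp (-π * ((r₁ : ℝ) ^ 2 - r₁ + 1 / 6) * τ.im) *
      ‖1 - Complex.exp (2 * π * I * (r₁ * τ + r₂))‖ * ‖∏' n, siegelTerm r₁ r₂ τ n‖ := by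
  have hphase : ‖Complex.exp (π * I * r₂ * (r₁ - 1))‖ = 1 := by
    rw [Complex.norm_exp, exp_eq_one_iff]; simp
  rw [siegel, norm_mul, norm_mul, norm_mul, norm_neg, hphase, mul_one, Complex.norm_exp]
  congr 3
  simp [sq]

section SiegelTerm

variable (r₁ r₂ : ℚ) (τ : ℂ)

theorem norm_siegelTerm_fst (n : ℕ) :
    ‖Complex.exp (2 * π * I * τ) ^ (n + 1) * Complex.exp (2 * π * I * (r₁ * τ + r₂))‖ =
      exp (-2 * π * τ.im) ^ n * exp (-2 * π * (1 + r₁) * τ.im) := by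
  rw [norm_mul, norm_pow, norm_exp_two_pi_I_mul, norm_exp_two_pi_I_mul, pow_succ, mul_assoc,
    ← exp_add]
  congr 2; simp; ring

theorem norm_siegelTerm_snd (n : ℕ) :
    ‖Complex.exp (2 * π * I * τ) ^ (n + 1) * (Complex.exp (2 * π * I * (r₁ * τ + r₂)))⁻¹‖ =
      exp (-2 * π * τ.im) ^ n * exp (-2 * π * (1 - r₁) * τ.im) := by
  rw [norm_mul, norm_pow, norm_inv, norm_exp_two_pi_I_mul, norm_exp_two_pi_I_mul, pow_succ,
    mul_assoc, ← exp_neg, ← exp_add]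
  congr 2; simp; ring

theorem one_sub_le_norm_siegelTerm (n : ℕ) :
    1 - exp (-2 * π * τ.im) ^ n *
      (exp (-2 * π * (1 + r₁) * τ.im) + exp (-2 * π * (1 - r₁) * τ.im)) ≤
        ‖siegelTerm r₁ r₂ τ n‖ := by
  have := one_sub_norm_sub_norm_le_norm_one_sub_mul_one_sub
    (Complex.exp (2 * π * I * τ) ^ (n + 1) * Complex.exp (2 * π * I * (r₁ * τ + r₂)))
    (Complex.exp (2 * π * I * τ) ^ (n + 1) * (Complex.exp (2 * π * I * (r₁ * τ + r₂)))⁻¹)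
  rw [norm_siegelTerm_fst, norm_siegelTerm_snd] at this
  rw [siegelTerm]
  linarith

theorem norm_siegelTerm_le_exp (n : ℕ) :
    ‖siegelTerm r₁ r₂ τ n‖ ≤ exp (exp (-2 * π * τ.im) ^ n *
      (exp (-2 * π * (1 + r₁) * τ.im) + exp (-2 * π * (1 - r₁) * τ.im))) := by
  have := norm_one_sub_mul_one_sub_le_exp
    (Complex.exp (2 * π * I * τ) ^ (n + 1) * Complex.exp (2 * π * I * (r₁ * τ + r₂)))
    (Complex.exp (2 * π * I * τ) ^ (n + 1) * (Complex.exp (2 * π * I * (r₁ * τ + r₂)))⁻¹)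
  rwa [norm_siegelTerm_fst, norm_siegelTerm_snd, ← mul_add] at this

theorem one_sub_le_norm_siegelTerm_zero_of_cos_nonpos
    (hcos : cos (2 * π * ((1 - r₁) * τ.re - r₂)) ≤ 0) :
    1 - exp (-2 * π * (1 + r₁) * τ.im) ≤ ‖siegelTerm r₁ r₂ τ 0‖ := by
  have hre : (Complex.exp (2 * π * I * τ) ^ (0 + 1) *
      (Complex.exp (2 * π * I * (r₁ * τ + r₂)))⁻¹).re ≤ 0 := by
    rw [pow_one, ← Complex.exp_neg, ← Complex.exp_add,
      show 2 * π * I * τ + -(2 * π * I * (r₁ * τ + r₂)) = 2 * π * I * ((1 - r₁) * τ - r₂) by ring,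
      re_exp_two_pi_I_mul]
    refine mul_nonpos_of_nonneg_of_nonpos (exp_pos _).le ?_
    simpa using hcos
  have := one_sub_norm_le_norm_one_sub_mul_one_sub
    (Complex.one_le_norm_one_sub_of_re_nonpos hre)
    (Complex.exp (2 * π * I * τ) ^ (0 + 1) * Complex.exp (2 * π * I * (r₁ * τ + r₂)))
  rw [norm_siegelTerm_fst, pow_zero, one_mul] at this
  exact this

end SiegelTerm

section SiegelProduct

variable {r₁ : ℚ} (r₂ : ℚ) {τ : ℂ}

theorem hasSum_siegelTerm_majorant (hτ : 0 < τ.im) :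
    HasSum (fun n : ℕ => exp (-2 * π * τ.im) ^ n *
        (exp (-2 * π * (1 + r₁) * τ.im) + exp (-2 * π * (1 - r₁) * τ.im)))
      ((1 - exp (-2 * π * τ.im))⁻¹ *
        (exp (-2 * π * (1 + r₁) * τ.im) + exp (-2 * π * (1 - r₁) * τ.im))) :=
  (hasSum_geometric_of_lt_one (exp_pos _).le
    (exp_lt_one_iff.2 (by nlinarith [pi_pos]))).mul_right _

theorem siegelTerm_majorant_sum_le (h0 : 0 ≤ r₁) (hτ : 0 < τ.im)
    (hγ : exp (-2 * π * (1 - r₁) * τ.im) ≤ 1 / 3) :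
    (1 - exp (-2 * π * τ.im))⁻¹ *
        (exp (-2 * π * (1 + r₁) * τ.im) + exp (-2 * π * (1 - r₁) * τ.im)) ≤
      3 * exp (-2 * π * (1 - r₁) * τ.im) := by
  have hr : 0 ≤ π * r₁ * τ.im := by positivity
  have ha : exp (-2 * π * τ.im) ≤ exp (-2 * π * (1 - r₁) * τ.im) := exp_le_exp.2 (by linarith)
  have hβ : exp (-2 * π * (1 + r₁) * τ.im) ≤ exp (-2 * π * (1 - r₁) * τ.im) :=
    exp_le_exp.2 (by linarith)
  rw [inv_mul_le_iff₀ (by linarith)]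
  nlinarith [exp_pos (-2 * π * τ.im), exp_pos (-2 * π * (1 - r₁) * τ.im)]

theorem one_sub_three_mul_le_norm_tprod_siegelTerm (h0 : 0 ≤ r₁) (hτ : 0 < τ.im) :
    1 - 3 * exp (-2 * π * (1 - r₁) * τ.im) ≤ ‖∏' n, siegelTerm r₁ r₂ τ n‖ := by
  by_cases hγ : exp (-2 * π * (1 - r₁) * τ.im) ≤ 1 / 3
  · refine le_trans ?_ (one_sub_le_norm_tprod (hasSum_siegelTerm_majorant hτ)
      (fun n => by positivity) (one_sub_le_norm_siegelTerm r₁ r₂ τ))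
    linarith [siegelTerm_majorant_sum_le h0 hτ hγ]
  · linarith [norm_nonneg (∏' n, siegelTerm r₁ r₂ τ n)]

theorem norm_tprod_siegelTerm_le (h0 : 0 ≤ r₁) (hτ : 0 < τ.im)
    (hγ : exp (-2 * π * (1 - r₁) * τ.im) ≤ 1 / 3) :
    ‖∏' n, siegelTerm r₁ r₂ τ n‖ ≤ exp (3 * exp (-2 * π * (1 - r₁) * τ.im)) :=
  (norm_tprod_le_exp (hasSum_siegelTerm_majorant hτ) (fun n => by positivity)
    (norm_siegelTerm_le_exp r₁ r₂ τ)).trans (exp_le_exp.2 (siegelTerm_majorant_sum_le h0 hτ hγ))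

theorem one_sub_three_mul_le_norm_tprod_siegelTerm_of_cos_nonpos (h0 : 0 ≤ r₁) (h1 : r₁ ≤ 1)
    (hτ : 0 < τ.im) (hcos : cos (2 * π * ((1 - r₁) * τ.re - r₂)) ≤ 0) :
    1 - 3 * exp (-2 * π * τ.im) ≤ ‖∏' n, siegelTerm r₁ r₂ τ n‖ := by
  have hu := (hasSum_siegelTerm_majorant (r₁ := r₁) hτ).sub
    (hasSum_ite_eq 0 (exp (-2 * π * (1 - r₁) * τ.im)))
  set a := exp (-2 * π * τ.im)
  set β := exp (-2 * π * (1 + r₁) * τ.im)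
  set γ := exp (-2 * π * (1 - r₁) * τ.im)
  by_cases ha : a ≤ 1 / 3
  swap
  · linarith [norm_nonneg (∏' n, siegelTerm r₁ r₂ τ n)]
  have hr : 0 ≤ π * r₁ * τ.im := by positivity
  have hr' : 0 ≤ π * (1 - r₁) * τ.im :=
    mul_nonneg (mul_nonneg pi_pos.le (sub_nonneg.2 (by exact_mod_cast h1))) hτ.le
  have hβ : β ≤ a := exp_le_exp.2 (by linarith)
  have hγ : γ ≤ 1 := exp_le_one_iff.2 (by linarith)
  -- the `n = 0` majorant drops the summand `γ`, controlled instead by `hcos`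
  refine le_trans ?_ (one_sub_le_norm_tprod hu (fun n => ?_) (fun n => ?_))
  · rw [sub_le_sub_iff_left, sub_le_iff_le_add, inv_mul_le_iff₀ (by linarith)]
    nlinarith [exp_pos (-2 * π * τ.im), exp_pos (-2 * π * (1 - r₁) * τ.im)]
  · rcases eq_or_ne n 0 with rfl | hn
    · simp only [pow_zero, one_mul, ↓reduceIte, add_sub_cancel_right]
      positivity
    · simp only [hn, ↓reduceIte, sub_zero]
      positivity
  · rcases eq_or_ne n 0 with rfl | hn
    · simp only [pow_zero, one_mul, ↓reduceIte, add_sub_cancel_right]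
      exact one_sub_le_norm_siegelTerm_zero_of_cos_nonpos r₁ r₂ τ hcos
    · simpa only [hn, ↓reduceIte, sub_zero] using one_sub_le_norm_siegelTerm r₁ r₂ τ n

end SiegelProduct

section SiegelBounds

variable {r₁ r₂ : ℚ} {τ : ℂ}

theorem norm_exp_two_pi_I_mul_z :
    ‖Complex.exp (2 * π * I * (r₁ * τ + r₂))‖ = exp (-2 * π * r₁ * τ.im) := by
  rw [norm_exp_two_pi_I_mul]; congr 1; simp; ring

theorem le_norm_siegel {E b γ : ℝ} (h0 : 0 ≤ r₁) (hτ : 0 < τ.im)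
    (hE : E ≤ exp (-π * ((r₁ : ℝ) ^ 2 - r₁ + 1 / 6) * τ.im)) (hb : exp (-2 * π * r₁ * τ.im) ≤ b)
    (hγ : exp (-2 * π * (1 - r₁) * τ.im) ≤ γ) (hE0 : 0 ≤ E) (hb1 : b ≤ 1) :
    E * (1 - b) * (1 - 3 * γ) ≤ ‖siegel r₁ r₂ τ‖ := by
  have hz : 1 - b ≤ ‖1 - Complex.exp (2 * π * I * (r₁ * τ + r₂))‖ := by
    have := norm_sub_norm_le (1 : ℂ) (Complex.exp (2 * π * I * (r₁ * τ + r₂)))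
    rw [norm_one, norm_exp_two_pi_I_mul_z] at this
    linarith
  have hprod := one_sub_three_mul_le_norm_tprod_siegelTerm r₂ h0 hτ
  rw [norm_siegel]
  calc E * (1 - b) * (1 - 3 * γ) ≤ E * (1 - b) * ‖∏' n, siegelTerm r₁ r₂ τ n‖ := by
        gcongr
        linarith
    _ ≤ _ := by gcongr

theorem le_norm_siegel_of_cos_z_nonpos {E γ : ℝ} (h0 : 0 ≤ r₁) (hτ : 0 < τ.im)
    (hcos : cos (2 * π * (r₁ * τ.re + r₂)) ≤ 0)
    (hE : E ≤ exp (-π * ((r₁ : ℝ) ^ 2 - r₁ + 1 / 6) * τ.im))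
    (hγ : exp (-2 * π * (1 - r₁) * τ.im) ≤ γ) (hE0 : 0 ≤ E) :
    E * (1 - 3 * γ) ≤ ‖siegel r₁ r₂ τ‖ := by
  have hz : 1 ≤ ‖1 - Complex.exp (2 * π * I * (r₁ * τ + r₂))‖ := by
    refine Complex.one_le_norm_one_sub_of_re_nonpos ?_
    rw [re_exp_two_pi_I_mul]
    exact mul_nonpos_of_nonneg_of_nonpos (exp_pos _).le (by simpa using hcos)
  have hprod := one_sub_three_mul_le_norm_tprod_siegelTerm r₂ h0 hτ
  rw [norm_siegel]
  calc E * (1 - 3 * γ) ≤ E * ‖∏' n, siegelTerm r₁ r₂ τ n‖ := by gcongr; linarith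
    _ = E * 1 * ‖∏' n, siegelTerm r₁ r₂ τ n‖ := by rw [mul_one]
    _ ≤ _ := by gcongr

theorem le_norm_siegel_of_cos_tau_sub_z_nonpos {E b a : ℝ} (h0 : 0 ≤ r₁) (h1 : r₁ ≤ 1)
    (hτ : 0 < τ.im) (hcos : cos (2 * π * ((1 - r₁) * τ.re - r₂)) ≤ 0)
    (hE : E ≤ exp (-π * ((r₁ : ℝ) ^ 2 - r₁ + 1 / 6) * τ.im)) (hb : exp (-2 * π * r₁ * τ.im) ≤ b)
    (ha : exp (-2 * π * τ.im) ≤ a) (hE0 : 0 ≤ E) (hb1 : b ≤ 1) :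
    E * (1 - b) * (1 - 3 * a) ≤ ‖siegel r₁ r₂ τ‖ := by
  have hz : 1 - b ≤ ‖1 - Complex.exp (2 * π * I * (r₁ * τ + r₂))‖ := by
    have := norm_sub_norm_le (1 : ℂ) (Complex.exp (2 * π * I * (r₁ * τ + r₂)))
    rw [norm_one, norm_exp_two_pi_I_mul_z] at this
    linarith
  have hprod := one_sub_three_mul_le_norm_tprod_siegelTerm_of_cos_nonpos r₂ h0 h1 hτ hcos
  rw [norm_siegel]
  calc E * (1 - b) * (1 - 3 * a) ≤ E * (1 - b) * ‖∏' n, siegelTerm r₁ r₂ τ n‖ := by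
        gcongr
        linarith
    _ ≤ _ := by gcongr

theorem norm_siegel_le (h0 : 0 ≤ r₁) (hτ : 0 < τ.im)
    (hγ : exp (-2 * π * (1 - r₁) * τ.im) ≤ 1 / 3) :
    ‖siegel r₁ r₂ τ‖ ≤ exp (-π * ((r₁ : ℝ) ^ 2 - r₁ + 1 / 6) * τ.im) *
      ‖1 - Complex.exp (2 * π * I * (r₁ * τ + r₂))‖ *
        exp (3 * exp (-2 * π * (1 - r₁) * τ.im)) := by
  rw [norm_siegel]
  gcongr
  exact norm_tprod_siegelTerm_le r₂ h0 hτ hγ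

end SiegelBounds

theorem pi_mul_sqrt_five_mem : π * √5 ∈ Set.Icc (7.02 : ℝ) 7.05 := by
  have h5 : √5 ^ 2 = 5 := sq_sqrt (by norm_num)
  have hs : (2.236 : ℝ) ≤ √5 ∧ √5 ≤ 2.237 := by
    constructor <;> nlinarith [sqrt_nonneg 5]
  constructor <;> nlinarith [pi_gt_d2, pi_lt_d2]

theorem exp_le_inv_ten_pow {x : ℝ} (k : ℕ) (hx : x ≤ -(7 / 3 * k)) : exp x ≤ 10⁻¹ ^ k := by
  have h10 : 10 ≤ exp (7 / 3) := le_trans (by norm_num [Finset.sum_range_succ, Nat.factorial])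
    (sum_le_exp_of_nonneg (by norm_num) 7)
  calc exp x ≤ exp (-(7 / 3)) ^ k := by
        rw [← exp_nat_mul]; exact exp_le_exp.2 (by linarith)
    _ ≤ 10⁻¹ ^ k := by
        gcongr
        rw [exp_neg]
        exact inv_anti₀ (by norm_num) h10

-- `gᵢ` denotes the Siegel value with `xᵢ = gᵢ ^ (-12)`.

theorem norm_g₁_pow_twelve_le : ‖siegel 0 (1 / 6) (I * √5)‖ ^ 12 ≤ 10⁻¹ ^ 6 := by
  obtain ⟨ht₁, ht₂⟩ := pi_mul_sqrt_five_mem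
  have hγ : exp (-2 * π * (1 - ((0 : ℚ) : ℝ)) * (I * √5).im) ≤ 10⁻¹ ^ 6 :=
    exp_le_inv_ten_pow 6 (by simp; linarith)
  have hz : ‖1 - Complex.exp (2 * π * I * (((0 : ℚ) : ℂ) * (I * √5) + ((1 / 6 : ℚ) : ℂ)))‖ = 1 := by
    rw [show 2 * π * I * (((0 : ℚ) : ℂ) * (I * √5) + ((1 / 6 : ℚ) : ℂ)) = I * ((π / 3 : ℝ) : ℂ) by
      push_cast; ring, norm_sub_rev, Complex.norm_exp_I_mul_ofReal_sub_one,
      show π / 3 / 2 = π / 6 by ring, sin_pi_div_six]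
    norm_num
  have hg := norm_siegel_le (r₂ := 1 / 6) le_rfl (by simp) (hγ.trans (by norm_num))
  rw [hz, mul_one, ← exp_add] at hg
  refine (pow_le_pow_left₀ (norm_nonneg _) hg 12).trans ?_
  rw [← exp_nat_mul]
  exact exp_le_inv_ten_pow 6 (by simp at hγ ⊢; linarith)

theorem seven_tenths_le_norm_g₂ : 7 / 10 ≤ ‖siegel (1 / 6) 0 (I * √5)‖ := by
  obtain ⟨ht₁, ht₂⟩ := pi_mul_sqrt_five_mem
  refine le_trans (by norm_num) (le_norm_siegel (E := 1 - 7.05 / 36) (b := 10⁻¹ ^ 1)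
    (γ := 10⁻¹ ^ 2) (by norm_num) (by simp) (le_trans (by simp; linarith) (add_one_le_exp _))
    (exp_le_inv_ten_pow 1 (by simp; linarith)) (exp_le_inv_ten_pow 2 (by simp; linarith))
    (by norm_num) (by norm_num))

theorem seven_tenths_le_norm_g₃ : 7 / 10 ≤ ‖siegel (3 / 6) (2 / 6) (I * √5)‖ := by
  obtain ⟨ht₁, ht₂⟩ := pi_mul_sqrt_five_mem
  refine le_trans (by norm_num) (le_norm_siegel (E := 1 + 7.02 / 12) (b := 10⁻¹ ^ 1)
    (γ := 10⁻¹ ^ 1) (by norm_num) (by simp) (le_trans (by simp; linarith) (add_one_le_exp _))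
    (exp_le_inv_ten_pow 1 (by simp; linarith)) (exp_le_inv_ten_pow 1 (by simp; linarith))
    (by norm_num) (by norm_num))

theorem seven_tenths_le_norm_g₄ : 7 / 10 ≤ ‖siegel (2 / 6) (3 / 6) (I * √5)‖ := by
  obtain ⟨ht₁, ht₂⟩ := pi_mul_sqrt_five_mem
  refine le_trans (by norm_num) (le_norm_siegel (E := 1 + 7.02 / 18) (b := 10⁻¹ ^ 1)
    (γ := 10⁻¹ ^ 1) (by norm_num) (by simp) (le_trans (by simp; linarith) (add_one_le_exp _))
    (exp_le_inv_ten_pow 1 (by simp; linarith)) (exp_le_inv_ten_pow 1 (by simp; linarith))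
    (by norm_num) (by norm_num))

theorem seven_tenths_le_norm_siegel_three_sixths (r₂ : ℚ) :
    7 / 10 ≤ ‖siegel (3 / 6) r₂ ((-1 + I * √5) / 2)‖ := by
  obtain ⟨ht₁, ht₂⟩ := pi_mul_sqrt_five_mem
  refine le_trans (by norm_num) (le_norm_siegel (E := 1 + 7.02 / 24) (b := 10⁻¹ ^ 1)
    (γ := 10⁻¹ ^ 1) (by norm_num) (by simp) (le_trans (by simp; linarith) (add_one_le_exp _))
    (exp_le_inv_ten_pow 1 (by simp; linarith)) (exp_le_inv_ten_pow 1 (by simp; linarith))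
    (by norm_num) (by norm_num))

theorem seven_tenths_le_norm_g₆ : 7 / 10 ≤ ‖siegel (1 / 6) (5 / 6) ((-1 + I * √5) / 2)‖ := by
  obtain ⟨ht₁, ht₂⟩ := pi_mul_sqrt_five_mem
  refine le_trans (by norm_num) (le_norm_siegel_of_cos_z_nonpos (E := 1 - 7.05 / 72)
    (γ := 10⁻¹ ^ 2) (by norm_num) (by simp) ?_ (le_trans (by simp; linarith) (add_one_le_exp _))
    (exp_le_inv_ten_pow 2 (by simp; linarith)) (by norm_num))
  simp only [show ((-1 + I * √5) / 2).re = -1 / 2 by simp]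
  push_cast
  rw [show 2 * π * (1 / 6 * (-1 / 2) + 5 / 6) = π / 2 + π by ring, cos_add_pi, cos_pi_div_two,
    neg_zero]

theorem seven_tenths_le_norm_g₈ : 7 / 10 ≤ ‖siegel (5 / 6) (4 / 6) ((-1 + I * √5) / 2)‖ := by
  obtain ⟨ht₁, ht₂⟩ := pi_mul_sqrt_five_mem
  refine le_trans (by norm_num) (le_norm_siegel_of_cos_tau_sub_z_nonpos (E := 1 - 7.05 / 72)
    (b := 10⁻¹ ^ 2) (a := 10⁻¹ ^ 2) (by norm_num) (by norm_num) (by simp) ?_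
    (le_trans (by simp; linarith) (add_one_le_exp _))
    (exp_le_inv_ten_pow 2 (by simp; linarith)) (exp_le_inv_ten_pow 2 (by simp; linarith))
    (by norm_num) (by norm_num))
  simp only [show ((-1 + I * √5) / 2).re = -1 / 2 by simp]
  push_cast
  rw [show 2 * π * ((1 - 5 / 6) * (-1 / 2) - 4 / 6) = -(π / 2 + π) by ring, cos_neg, cos_add_pi,
    cos_pi_div_two, neg_zero]

/-- With `x₁, …, x₈` as above, `|xᵢ/x₁| < 10⁻⁴` for `i = 2, …, 8`;
in particular `|xᵢ/x₁| < 1/8` for `i = 2, …, 8`. -/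
theorem example_conjugate_ratios_small :
    ∀ i : Fin 8, i ≠ 0 →
      ‖exampleConjugates i / exampleConjugates 0‖ < 1 / 10 ^ 4 ∧
      ‖exampleConjugates i / exampleConjugates 0‖ < 1 / 8 := by
  intro i hi
  obtain ⟨g, hg, hx⟩ : ∃ g : ℂ, 7 / 10 ≤ ‖g‖ ∧ exampleConjugates i = g ^ (-12 : ℤ) := by
    fin_cases i
    · exact absurd rfl hi
    · exact ⟨_, seven_tenths_le_norm_g₂, rfl⟩
    · exact ⟨_, seven_tenths_le_norm_g₃, rfl⟩
    · exact ⟨_, seven_tenths_le_norm_g₄, rfl⟩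
    · exact ⟨_, seven_tenths_le_norm_siegel_three_sixths _, rfl⟩
    · exact ⟨_, seven_tenths_le_norm_g₆, rfl⟩
    · exact ⟨_, seven_tenths_le_norm_siegel_three_sixths _, rfl⟩
    · exact ⟨_, seven_tenths_le_norm_g₈, rfl⟩
  have hratio : ‖exampleConjugates i / exampleConjugates 0‖ < 1 / 10 ^ 4 := by
    rw [hx, show exampleConjugates 0 = siegel 0 (1 / 6) (I * √5) ^ (-12 : ℤ) from rfl, zpow_neg,
      zpow_neg, inv_div_inv, norm_div, norm_zpow, norm_zpow]
    calc ‖siegel 0 (1 / 6) (I * √5)‖ ^ (12 : ℤ) / ‖g‖ ^ (12 : ℤ) ≤ 10⁻¹ ^ 6 / (7 / 10) ^ 12 := by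
          simp only [zpow_ofNat]
          gcongr
          exact norm_g₁_pow_twelve_le
      _ < 1 / 10 ^ 4 := by norm_num
  exact ⟨hratio, hratio.trans (by norm_num)⟩
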